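/- arXiv:2301.00536 — 6 statements merged into one kernel-verified Lean document; each statement's English description precedes it below -/
import Mathlib

section
/- Let α, β ∈ ℝ with −1/2 < α − β < 0 and T > 0. Define χ(t) := ∫₀^{T−t} (∫_r^{t+r} s^{α−β−1} ds)² dr for t ∈ (0,T). Then there exists N = N(α,β) such that 0 ≤ χ(t) ≤ N t^{2(α−β)+1} for all t ∈ (0,T). -/
open MeasureTheory Set

/-- The function `χ(t) = ∫₀^{T−t} (∫_r^{t+r} s^{α−β−1} ds)² dr`. -/
noncomputable def chiFun (α β T t : ℝ) : ℝ :=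
  ∫ r in Ioo (0 : ℝ) (T - t), (∫ s in Ioo r (t + r), s ^ (α - β - 1)) ^ 2

lemma chi_inner_eq (γ t r : ℝ) (hγ : γ ≠ 0) (hr : 0 < r) (ht : 0 ≤ t) :
    ∫ s in Ioo r (t + r), s ^ (γ - 1) = ((t + r) ^ γ - r ^ γ) / γ := by
  rw [← integral_Ioc_eq_integral_Ioo, ← intervalIntegral.integral_of_le (by linarith)]
  rw [integral_rpow (Or.inr ⟨by intro h; apply hγ; linarith, by
    rw [uIcc_of_le (by linarith)]; intro h; exact absurd h.1 (by linarith)⟩)]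
  simp [sub_add_cancel]

lemma chi_sq_bound (γ : ℝ) (hγ : γ < 0) {t r : ℝ} (ht : 0 < t) (hr : 0 < r) :
    ((t + r) ^ γ - r ^ γ) ^ 2 ≤ r ^ (2 * γ) - (t + r) ^ (2 * γ) := by
  have ha : (0:ℝ) < (t + r) ^ γ := Real.rpow_pos_of_pos (by linarith) γ
  have hb : (t + r) ^ γ ≤ r ^ γ := Real.rpow_le_rpow_of_nonpos hr (by linarith) hγ.le
  have h1 : r ^ (2 * γ) = r ^ γ * r ^ γ := by
    rw [two_mul, Real.rpow_add hr]
  have h2 : (t + r) ^ (2 * γ) = (t + r) ^ γ * (t + r) ^ γ := by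
    rw [two_mul, Real.rpow_add (by linarith)]
  rw [h1, h2]
  nlinarith

/-- Case `−1/2 < α − β < 0`: `0 ≤ χ(t) ≤ N t^{2(α−β)+1}` on `(0,T)` with
`N = N(α,β)`. -/
theorem chiFun_bound_neg (α β : ℝ) (h₁ : -(1 / 2) < α - β) (h₂ : α - β < 0) :
    ∃ N : ℝ, 0 < N ∧ ∀ T : ℝ, 0 < T → ∀ t ∈ Ioo (0 : ℝ) T,
      0 ≤ chiFun α β T t ∧ chiFun α β T t ≤ N * t ^ (2 * (α - β) + 1) := by
  set γ := α - β with hγdef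
  have hγ0 : γ ≠ 0 := h₂.ne
  have h2γ : (-1 : ℝ) < 2 * γ := by linarith
  have h2γ1 : (0 : ℝ) < 2 * γ + 1 := by linarith
  have hγsq : (0 : ℝ) < γ ^ 2 := by positivity
  refine ⟨1 / (γ ^ 2 * (2 * γ + 1)), by positivity, fun T hT t ht => ?_⟩
  obtain ⟨ht0, htT⟩ := ht
  have hc : (0 : ℝ) < T - t := by linarith
  constructor
  · exact setIntegral_nonneg measurableSet_Ioo (fun r _ => sq_nonneg _)
  -- the dominating function
  set g : ℝ → ℝ := fun r => (r ^ (2 * γ) - (t + r) ^ (2 * γ)) / γ ^ 2 with hg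
  have I1 : IntervalIntegrable (fun r : ℝ => r ^ (2 * γ)) volume 0 (T - t) :=
    intervalIntegral.intervalIntegrable_rpow' h2γ
  have I2 : IntervalIntegrable (fun r : ℝ => (t + r) ^ (2 * γ)) volume 0 (T - t) := by
    have h := (intervalIntegral.intervalIntegrable_rpow' h2γ (a := t)
      (b := T)).comp_add_left t
    simpa using h
  have Ig : IntervalIntegrable g volume 0 (T - t) := (I1.sub I2).div_const _
  have hgInt : IntegrableOn g (Ioo (0 : ℝ) (T - t)) volume :=
    ((intervalIntegrable_iff_integrableOn_Ioc_of_le hc.le).mp Ig).mono_set Ioo_subset_Ioc_self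
  -- pointwise bound on Ioo
  have hle : ∀ r ∈ Ioo (0 : ℝ) (T - t),
      (∫ s in Ioo r (t + r), s ^ (γ - 1)) ^ 2 ≤ g r := by
    intro r hr
    rw [chi_inner_eq γ t r hγ0 hr.1 ht0.le, div_pow]
    show _ ≤ (r ^ (2 * γ) - (t + r) ^ (2 * γ)) / γ ^ 2
    gcongr
    exact chi_sq_bound γ h₂ ht0 hr.1
  -- chiFun ≤ ∫ g
  have hstep : chiFun α β T t ≤ ∫ r in Ioo (0 : ℝ) (T - t), g r := by
    refine integral_mono_of_nonneg (Filter.Eventually.of_forall fun r => sq_nonneg _)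
      hgInt ?_
    rw [Filter.EventuallyLE, ae_restrict_iff' measurableSet_Ioo]
    exact Filter.Eventually.of_forall hle
  refine hstep.trans ?_
  -- compute ∫ g
  have hval : ∫ r in Ioo (0 : ℝ) (T - t), g r =
      (((T - t) ^ (2 * γ + 1) - (T ^ (2 * γ + 1) - t ^ (2 * γ + 1))) / (2 * γ + 1)) / γ ^ 2 := by
    rw [← integral_Ioc_eq_integral_Ioo, ← intervalIntegral.integral_of_le hc.le]
    have : ∀ r : ℝ, g r = (r ^ (2 * γ) - (t + r) ^ (2 * γ)) / γ ^ 2 := fun r => rfl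
    calc ∫ r in (0:ℝ)..(T - t), g r
        = (∫ r in (0:ℝ)..(T - t), (r ^ (2 * γ) - (t + r) ^ (2 * γ))) / γ ^ 2 := by
          rw [← intervalIntegral.integral_div]
      _ = ((∫ r in (0:ℝ)..(T - t), r ^ (2 * γ))
            - ∫ r in (0:ℝ)..(T - t), (t + r) ^ (2 * γ)) / γ ^ 2 := by
          rw [intervalIntegral.integral_sub I1 I2]
      _ = _ := by
          rw [intervalIntegral.integral_comp_add_left (fun s => s ^ (2 * γ)) t,
            integral_rpow (Or.inl h2γ), integral_rpow (Or.inl h2γ)]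
          have h0 : (0 : ℝ) ^ (2 * γ + 1) = 0 := Real.zero_rpow (by linarith)
          rw [add_zero, h0]
          have hTT : t + (T - t) = T := by ring
          rw [hTT]
          ring
  rw [hval]
  have hmono : (T - t) ^ (2 * γ + 1) ≤ T ^ (2 * γ + 1) :=
    Real.rpow_le_rpow hc.le (by linarith) h2γ1.le
  have htp : (0:ℝ) < t ^ (2 * γ + 1) := Real.rpow_pos_of_pos ht0 _
  rw [div_div, one_div, ← div_eq_inv_mul, mul_comm (2 * γ + 1) (γ ^ 2)]
  gcongr
  linarith
end

section
/- Let T > 0 and define χ(t) := ∫₀^{T−t} (log((t+r)/r))² dr for t ∈ (0,T). Then χ(0) = 0 and 0 ≤ χ(t) ≤ (π²/3) t for all t ∈ (0, T/2]. -/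
/-!
Substituting `r = t / (exp y - 1)` turns `log ((t + r) / r)` into `y`, so
`∫₀^∞ log ((t + r) / r) ^ 2 dr = t ∫₀^∞ y² eʸ / (eʸ - 1)² dy`. Expanding
`eʸ / (eʸ - 1)² = ∑ n e^{-ny}` and integrating termwise gives `t ∑ 2 / n² = π² t / 3`.
Since `(0, T - t) ⊆ (0, ∞)` and the integrand is nonnegative, `χ(t) ≤ π² t / 3`.
-/

open MeasureTheory Set Real

/-- The borderline function `χ(t) = ∫₀^{T−t} (log((t+r)/r))² dr`. -/
noncomputable def chiLog (T t : ℝ) : ℝ :=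
  ∫ r in Ioo (0 : ℝ) (T - t), (Real.log ((t + r) / r)) ^ 2

open scoped Nat

lemma integral_pow_mul_exp_neg_mul_Ioi (k : ℕ) {c : ℝ} (hc : 0 < c) :
    ∫ x in Ioi (0 : ℝ), x ^ k * exp (-(c * x)) = k ! / c ^ (k + 1) := by
  have key := integral_rpow_mul_exp_neg_mul_Ioi (a := k + 1) (by positivity) hc
  simp_rw [add_sub_cancel_right, rpow_natCast, Gamma_nat_eq_factorial] at key
  rw [key, one_div, inv_rpow hc.le, ← rpow_natCast]
  push_cast
  ring

lemma lintegral_pow_mul_exp_neg_mul_Ioi (k : ℕ) {c : ℝ} (hc : 0 < c) :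
    ∫⁻ x in Ioi (0 : ℝ), ENNReal.ofReal (x ^ k * exp (-(c * x))) =
      ENNReal.ofReal (k ! / c ^ (k + 1)) := by
  have hint : IntegrableOn (fun x => x ^ k * exp (-(c * x))) (Ioi 0) :=
    .of_integral_ne_zero (by rw [integral_pow_mul_exp_neg_mul_Ioi k hc]; positivity)
  rw [← integral_pow_mul_exp_neg_mul_Ioi k hc, ofReal_integral_eq_lintegral_ofReal hint]
  filter_upwards [ae_restrict_mem measurableSet_Ioi] with x hx
  exact mul_nonneg (pow_nonneg (le_of_lt hx) _) (exp_nonneg _)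

lemma hasSum_nat_mul_exp_neg_mul {y : ℝ} (hy : 0 < y) :
    HasSum (fun n : ℕ => n * exp (-(n * y))) (exp y / (exp y - 1) ^ 2) := by
  have hr : ‖exp (-y)‖ < 1 := by
    rw [norm_of_nonneg (exp_nonneg _)]
    exact exp_lt_one_iff.mpr (neg_lt_zero.mpr hy)
  have hexp : exp y - 1 ≠ 0 := (sub_pos.mpr (one_lt_exp_iff.mpr hy)).ne'
  have hterm : (fun n : ℕ => n * exp (-(n * y))) = fun n : ℕ => (n : ℝ) * exp (-y) ^ n := by
    ext n
    rw [← exp_nat_mul, mul_neg]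
  have hsum : exp y / (exp y - 1) ^ 2 = exp (-y) / (1 - exp (-y)) ^ 2 := by
    rw [exp_neg]
    field_simp
  rw [hterm, hsum]
  exact hasSum_coe_mul_geometric_of_norm_lt_one hr

lemma lintegral_sq_mul_exp_div_exp_sub_one_sq :
    ∫⁻ y in Ioi (0 : ℝ), ENNReal.ofReal (y ^ 2 * (exp y / (exp y - 1) ^ 2)) =
      ENNReal.ofReal (π ^ 2 / 3) := by
  have hterm (n : ℕ) :
      ∫⁻ y in Ioi (0 : ℝ), ENNReal.ofReal (n * (y ^ 2 * exp (-(n * y)))) =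
        ENNReal.ofReal (2 / n ^ 2) := by
    rcases Nat.eq_zero_or_pos n with rfl | hn
    · simp
    have hn : (0 : ℝ) < n := Nat.cast_pos.mpr hn
    simp_rw [ENNReal.ofReal_mul hn.le]
    rw [lintegral_const_mul' _ _ ENNReal.ofReal_ne_top, lintegral_pow_mul_exp_neg_mul_Ioi 2 hn,
      ← ENNReal.ofReal_mul hn.le]
    congr 1
    field_simp
    norm_num
  have hzeta : HasSum (fun n : ℕ => 2 / (n : ℝ) ^ 2) (π ^ 2 / 3) := by
    have h := hasSum_zeta_two.mul_left 2
    rw [show 2 * (π ^ 2 / 6) = π ^ 2 / 3 by ring] at h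
    simpa only [mul_one_div] using h
  calc ∫⁻ y in Ioi (0 : ℝ), ENNReal.ofReal (y ^ 2 * (exp y / (exp y - 1) ^ 2))
      = ∫⁻ y in Ioi (0 : ℝ), ∑' n : ℕ, ENNReal.ofReal (n * (y ^ 2 * exp (-(n * y)))) := by
        refine setLIntegral_congr_fun measurableSet_Ioi fun y hy => ?_
        have hsum := (hasSum_nat_mul_exp_neg_mul hy).mul_left (y ^ 2)
        simp_rw [mul_left_comm (y ^ 2)] at hsum
        rw [← ENNReal.ofReal_tsum_of_nonneg (fun n => by positivity) hsum.summable, hsum.tsum_eq]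
    _ = ∑' n : ℕ, ∫⁻ y in Ioi (0 : ℝ), ENNReal.ofReal (n * (y ^ 2 * exp (-(n * y)))) :=
        lintegral_tsum fun n => by fun_prop
    _ = ENNReal.ofReal (π ^ 2 / 3) := by
        simp_rw [hterm]
        rw [← ENNReal.ofReal_tsum_of_nonneg (fun n => by positivity) hzeta.summable,
          hzeta.tsum_eq]

lemma bijOn_div_exp_sub_one {t : ℝ} (ht : 0 < t) :
    BijOn (fun y => t / (exp y - 1)) (Ioi 0) (Ioi 0) := by
  refine InvOn.bijOn (f' := fun r => log (1 + t / r)) ⟨fun y hy => ?_, fun r hr => ?_⟩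
    (fun y hy => div_pos ht (sub_pos.mpr (one_lt_exp_iff.mpr hy)))
    (fun r hr => log_pos (lt_add_of_pos_right 1 (div_pos ht hr)))
  · simp only [div_div_eq_mul_div, mul_div_cancel_left₀ _ ht.ne', add_sub_cancel, log_exp]
  · have htr : 0 < t / r := div_pos ht hr
    simp only
    rw [exp_log (by positivity), add_sub_cancel_left, div_div_cancel₀ ht.ne']

lemma lintegral_sq_log_add_div_Ioi {t : ℝ} (ht : 0 < t) :
    ∫⁻ r in Ioi (0 : ℝ), ENNReal.ofReal (log ((t + r) / r) ^ 2) =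
      ENNReal.ofReal t *
        ∫⁻ y in Ioi (0 : ℝ), ENNReal.ofReal (y ^ 2 * (exp y / (exp y - 1) ^ 2)) := by
  have hderiv (y : ℝ) (hy : y ∈ Ioi 0) : HasDerivWithinAt (fun y => t / (exp y - 1))
      (t * (-exp y / (exp y - 1) ^ 2)) (Ioi 0) y := by
    have hexp : exp y - 1 ≠ 0 := (sub_pos.mpr (one_lt_exp_iff.mpr hy)).ne'
    simp_rw [div_eq_mul_inv t]
    exact ((((hasDerivAt_exp y).sub_const 1).inv hexp).const_mul t).hasDerivWithinAt
  nth_rw 1 [← (bijOn_div_exp_sub_one ht).image_eq]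
  rw [lintegral_image_eq_lintegral_abs_deriv_mul measurableSet_Ioi hderiv
      (bijOn_div_exp_sub_one ht).injOn,
    ← lintegral_const_mul' _ _ ENNReal.ofReal_ne_top]
  refine setLIntegral_congr_fun measurableSet_Ioi fun y hy => ?_
  have hexp : 0 < exp y - 1 := sub_pos.mpr (one_lt_exp_iff.mpr hy)
  have hlog : (t + t / (exp y - 1)) / (t / (exp y - 1)) = exp y := by
    field_simp
    ring
  have hjac : 0 < exp y / (exp y - 1) ^ 2 := by positivity
  rw [hlog, log_exp, abs_mul, neg_div, abs_neg, abs_of_pos ht, abs_of_pos hjac,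
    ← ENNReal.ofReal_mul (mul_pos ht hjac).le, ← ENNReal.ofReal_mul ht.le]
  congr 1
  ring

lemma integral_sq_log_add_div_Ioi {t : ℝ} (ht : 0 < t) :
    ∫ r in Ioi (0 : ℝ), log ((t + r) / r) ^ 2 = π ^ 2 / 3 * t := by
  rw [integral_eq_lintegral_of_nonneg_ae (ae_of_all _ fun r => sq_nonneg _)
      (by fun_prop : Measurable _).aestronglyMeasurable,
    lintegral_sq_log_add_div_Ioi ht, lintegral_sq_mul_exp_div_exp_sub_one_sq,
    ← ENNReal.ofReal_mul ht.le, ENNReal.toReal_ofReal (by positivity), mul_comm]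

theorem chiLog_bound_general (T : ℝ) :
    chiLog T 0 = 0 ∧ ∀ t ∈ Ioc (0 : ℝ) (T / 2),
      0 ≤ chiLog T t ∧ chiLog T t ≤ (π ^ 2 / 3) * t := by
  refine ⟨by simp [chiLog], fun t ⟨ht, _⟩ => ⟨?_, ?_⟩⟩
  · exact setIntegral_nonneg measurableSet_Ioo fun r _ => sq_nonneg _
  · have hint : IntegrableOn (fun r => log ((t + r) / r) ^ 2) (Ioi 0) :=
      .of_integral_ne_zero (by rw [integral_sq_log_add_div_Ioi ht]; positivity)
    rw [chiLog, ← integral_sq_log_add_div_Ioi ht]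
    exact setIntegral_mono_set hint (ae_of_all _ fun r => sq_nonneg _)
      Ioo_subset_Ioi_self.eventuallyLE

/-- Case `α = β`: `χ(0) = 0` and `0 ≤ χ(t) ≤ (π²/3) t` on `(0, T/2]`. -/
theorem chiLog_bound (T : ℝ) (hT : 0 < T) :
    chiLog T 0 = 0 ∧ ∀ t ∈ Ioc (0 : ℝ) (T / 2),
      0 ≤ chiLog T t ∧ chiLog T t ≤ (π ^ 2 / 3) * t :=
  chiLog_bound_general T
end

section
/- Let 0 < α − β < 1/2 and T > 0. Define χ(t) := ∫₀^{T−t} (∫_r^{t+r} s^{α−β−1} ds)² dr. Then χ is twice continuously differentiable on (0,T) with χ(0) = χ'(0) = 0, and there exists N = N(α,β,T) such that χ(t) ≤ N t^{2(α−β)+1} for all t ∈ (0,T). -/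
open MeasureTheory Set

/-- Auxiliary integrand `((1+u)^γ - u^γ)²`. -/
noncomputable def ggAux (γ u : ℝ) : ℝ := ((1 + u) ^ γ - u ^ γ) ^ 2

/-- Auxiliary function `G(x) = ∫₀ˣ ((1+u)^γ - u^γ)² du`. -/
noncomputable def GGAux (γ x : ℝ) : ℝ := ∫ u in (0:ℝ)..x, ggAux γ u

lemma ggAux_cont {γ : ℝ} (hγ : 0 < γ) : Continuous (ggAux γ) := by
  have h : Continuous fun x : ℝ => x ^ γ :=
    continuous_iff_continuousAt.mpr fun x => Real.continuousAt_rpow_const x γ (Or.inr hγ.le)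
  exact ((h.comp (continuous_const.add continuous_id)).sub h).pow 2

lemma hasDerivAt_GGAux {γ : ℝ} (hγ : 0 < γ) (x : ℝ) :
    HasDerivAt (GGAux γ) (ggAux γ x) x :=
  intervalIntegral.integral_hasDerivAt_right
    ((ggAux_cont hγ).intervalIntegrable _ _)
    ((ggAux_cont hγ).stronglyMeasurableAtFilter _ _)
    (ggAux_cont hγ).continuousAt

lemma contDiffOn_GGAux {γ : ℝ} (hγ : 0 < γ) :
    ContDiffOn ℝ 2 (GGAux γ) (Ioi (0:ℝ)) := by
  rw [show (2 : WithTop ℕ∞) = 1 + 1 by rfl]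
  refine (contDiffOn_succ_iff_deriv_of_isOpen isOpen_Ioi).mpr ⟨?_, ?_, ?_⟩
  · exact fun x _ => (hasDerivAt_GGAux hγ x).differentiableAt.differentiableWithinAt
  · intro h; simp at h
  · have hd : deriv (GGAux γ) = ggAux γ := funext fun x => (hasDerivAt_GGAux hγ x).deriv
    rw [hd]
    intro x hx
    have hx0 : (0:ℝ) < x := hx
    have c1 : ContDiffAt ℝ 1 (fun u : ℝ => (1 + u) ^ γ) x := by
      have : ContDiffAt ℝ 1 (fun y : ℝ => y ^ γ) (1 + x) :=
        Real.contDiffAt_rpow_const_of_ne (by linarith)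
      exact this.comp x (contDiffAt_const.add contDiffAt_id)
    have c2 : ContDiffAt ℝ 1 (fun u : ℝ => u ^ γ) x :=
      Real.contDiffAt_rpow_const_of_ne hx0.ne'
    exact ((c1.sub c2).pow 2).contDiffWithinAt

lemma ggAux_nonneg_diff {γ u : ℝ} (hγ : 0 < γ) (hu : 0 ≤ u) :
    0 ≤ (1 + u) ^ γ - u ^ γ :=
  sub_nonneg.mpr (Real.rpow_le_rpow hu (by linarith) hγ.le)

lemma ggAux_le_four {γ u : ℝ} (hγ : 0 < γ) (hγ1 : γ ≤ 1) (hu : 0 ≤ u) (hu1 : u ≤ 1) :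
    ggAux γ u ≤ 4 := by
  have h1 : (1 + u) ^ γ - u ^ γ ≤ 2 := by
    have h2 : (1 + u) ^ γ ≤ (2:ℝ) ^ γ := Real.rpow_le_rpow (by linarith) (by linarith) hγ.le
    have h3 : (2:ℝ) ^ γ ≤ (2:ℝ) ^ (1:ℝ) := Real.rpow_le_rpow_of_exponent_le (by norm_num) hγ1
    have h4 : (0:ℝ) ≤ u ^ γ := Real.rpow_nonneg hu γ
    rw [Real.rpow_one] at h3
    linarith
  have h0 := ggAux_nonneg_diff (u := u) hγ hu
  have := pow_le_pow_left₀ h0 h1 2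
  simpa [ggAux] using this.trans (by norm_num)

lemma ggAux_le_rpow {γ u : ℝ} (hγ : 0 < γ) (hγ1 : γ ≤ 1) (hu : 1 ≤ u) :
    ggAux γ u ≤ γ ^ 2 * u ^ (2 * γ - 2) := by
  have hu0 : (0:ℝ) < u := by linarith
  have key : (1 + u) ^ γ - u ^ γ ≤ γ * u ^ (γ - 1) := by
    have hrw : (1 + u : ℝ) = u * (1 + 1 / u) := by field_simp; ring_nf
    have h1 : (1 + u) ^ γ = u ^ γ * (1 + 1 / u) ^ γ := by
      rw [hrw, Real.mul_rpow hu0.le (by positivity)]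
    have h2 : (1 + 1 / u) ^ γ ≤ 1 + γ * (1 / u) :=
      rpow_one_add_le_one_add_mul_self
        (by linarith [one_div_nonneg.mpr hu0.le] : (-1:ℝ) ≤ 1/u) hγ.le hγ1
    have h3 : (1 + u) ^ γ ≤ u ^ γ * (1 + γ * (1 / u)) := by
      rw [h1]
      exact mul_le_mul_of_nonneg_left h2 (Real.rpow_nonneg hu0.le γ)
    have h4 : u ^ γ * (1 + γ * (1 / u)) = u ^ γ + γ * (u ^ γ / u) := by ring
    have h5 : u ^ γ / u = u ^ (γ - 1) := by
      rw [Real.rpow_sub hu0, Real.rpow_one]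
    rw [h4, h5] at h3
    linarith
  have h0 := ggAux_nonneg_diff (u := u) hγ hu0.le
  have hsq := pow_le_pow_left₀ h0 key 2
  have hrw2 : (γ * u ^ (γ - 1)) ^ 2 = γ ^ 2 * u ^ (2 * γ - 2) := by
    rw [mul_pow, sq (u ^ (γ - 1)), ← Real.rpow_add hu0]
    congr 1
    ring
  rw [hrw2] at hsq
  exact hsq

lemma GGAux_nonneg {γ x : ℝ} (hx : 0 ≤ x) : 0 ≤ GGAux γ x :=
  intervalIntegral.integral_nonneg hx fun u _ => sq_nonneg _

lemma GGAux_le {γ : ℝ} (hγ : 0 < γ) (hγ2 : γ < 1/2) {x : ℝ} (hx : 0 ≤ x) :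
    GGAux γ x ≤ 4 + γ ^ 2 / (1 - 2 * γ) := by
  have hγ1 : γ ≤ 1 := by linarith
  have hden : 0 < 1 - 2 * γ := by linarith
  have hnn : 0 ≤ γ ^ 2 / (1 - 2 * γ) := by positivity
  have hint : ∀ a b : ℝ, IntervalIntegrable (ggAux γ) volume a b :=
    fun a b => (ggAux_cont hγ).intervalIntegrable a b
  have hfirst : ∀ y : ℝ, 0 ≤ y → y ≤ 1 → GGAux γ y ≤ 4 := by
    intro y hy hy1
    have := intervalIntegral.integral_mono_on hy (hint 0 y)
      (intervalIntegrable_const (c := (4:ℝ)))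
      (fun u hu => ggAux_le_four hγ hγ1 hu.1 (hu.2.trans hy1))
    have h4 : ∫ _ in (0:ℝ)..y, (4:ℝ) = y * 4 := by simp
    rw [h4] at this
    simp only [GGAux]
    linarith
  rcases le_or_gt x 1 with hx1 | hx1
  · exact (hfirst x hx hx1).trans (by linarith)
  · have hsplit : GGAux γ x = GGAux γ 1 + ∫ u in (1:ℝ)..x, ggAux γ u := by
      rw [GGAux, GGAux, intervalIntegral.integral_add_adjacent_intervals (hint 0 1) (hint 1 x)]
    have htail : (∫ u in (1:ℝ)..x, ggAux γ u) ≤ γ ^ 2 / (1 - 2 * γ) := by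
      have hii : IntervalIntegrable (fun u : ℝ => γ ^ 2 * u ^ (2 * γ - 2)) volume 1 x := by
        apply ContinuousOn.intervalIntegrable
        rw [uIcc_of_le hx1.le]
        apply ContinuousOn.mul continuousOn_const
        intro u hu
        exact (Real.continuousAt_rpow_const u _ (Or.inl (by linarith [hu.1]))).continuousWithinAt
      have hmono := intervalIntegral.integral_mono_on hx1.le (hint 1 x) hii
        (fun u hu => ggAux_le_rpow hγ hγ1 hu.1)
      have hval : (∫ u in (1:ℝ)..x, γ ^ 2 * u ^ (2 * γ - 2))
          = γ ^ 2 * ((x ^ (2 * γ - 1) - 1) / (2 * γ - 1)) := by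
        rw [intervalIntegral.integral_const_mul]
        rw [integral_rpow (Or.inr ⟨by intro h; apply hden.ne'; linarith [h],
          by rw [uIcc_of_le hx1.le]; exact fun h => by linarith [h.1]⟩)]
        have he : 2 * γ - 2 + 1 = 2 * γ - 1 := by ring
        rw [he, Real.one_rpow]
      rw [hval] at hmono
      refine hmono.trans ?_
      have hc : 0 < x ^ (2 * γ - 1) := Real.rpow_pos_of_pos (by linarith) _
      have heq : (x ^ (2 * γ - 1) - 1) / (2 * γ - 1) = (1 - x ^ (2 * γ - 1)) / (1 - 2 * γ) := by
        rw [div_eq_div_iff (by linarith) (by linarith)]; ring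
      rw [heq]
      calc γ ^ 2 * ((1 - x ^ (2 * γ - 1)) / (1 - 2 * γ))
          ≤ γ ^ 2 * (1 / (1 - 2 * γ)) := by
            apply mul_le_mul_of_nonneg_left _ (sq_nonneg γ)
            rw [div_le_div_iff₀ hden hden]
            nlinarith
        _ = γ ^ 2 / (1 - 2 * γ) := by rw [mul_one_div]
    have h1 := hfirst 1 zero_le_one le_rfl
    rw [hsplit] at *
    linarith

lemma chiFun_of_nonpos (α β T : ℝ) {t : ℝ} (ht : t ≤ 0) : chiFun α β T t = 0 := by
  have h : ∀ r : ℝ, Ioo r (t + r) = (∅ : Set ℝ) :=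
    fun r => Ioo_eq_empty (by intro h; linarith)
  simp [chiFun, h]

lemma chiFun_eq (α β T : ℝ) (h₁ : 0 < α - β) {t : ℝ} (ht : t ∈ Ioo (0:ℝ) T) :
    chiFun α β T t
      = t ^ (2 * (α - β) + 1) / (α - β) ^ 2 * GGAux (α - β) ((T - t) / t) := by
  set γ := α - β with hγdef
  obtain ⟨ht0, htT⟩ := ht
  have hTt : (0:ℝ) ≤ T - t := by linarith
  have hinner : ∀ r ∈ Ioo (0:ℝ) (T - t),
      (∫ s in Ioo r (t + r), s ^ (γ - 1)) ^ 2 = (((t + r) ^ γ - r ^ γ) / γ) ^ 2 := by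
    intro r hr
    have hr0 : 0 < r := hr.1
    have hle : r ≤ t + r := by linarith
    have : (∫ s in Ioo r (t + r), s ^ (γ - 1)) = ((t + r) ^ γ - r ^ γ) / γ := by
      rw [← integral_Ioc_eq_integral_Ioo, ← intervalIntegral.integral_of_le hle,
        integral_rpow (Or.inl (by linarith : (-1:ℝ) < γ - 1))]
      have : γ - 1 + 1 = γ := by ring
      rw [this]
    rw [this]
  rw [chiFun, setIntegral_congr_fun measurableSet_Ioo hinner]
  rw [← integral_Ioc_eq_integral_Ioo, ← intervalIntegral.integral_of_le hTt]
  have hchg := intervalIntegral.integral_comp_mul_left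
    (fun r => (((t + r) ^ γ - r ^ γ) / γ) ^ 2) (ht0.ne' : t ≠ 0)
    (a := (0:ℝ)) (b := (T - t) / t)
  rw [mul_zero, mul_div_cancel₀ _ ht0.ne'] at hchg
  have hmain : (∫ r in (0:ℝ)..(T - t), (((t + r) ^ γ - r ^ γ) / γ) ^ 2)
      = t * ∫ u in (0:ℝ)..((T - t) / t), (((t + t * u) ^ γ - (t * u) ^ γ) / γ) ^ 2 := by
    rw [hchg, smul_eq_mul, ← mul_assoc, mul_inv_cancel₀ ht0.ne', one_mul]
  rw [hmain]
  have hTt' : (0:ℝ) ≤ (T - t) / t := div_nonneg hTt ht0.le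
  have hcongr : EqOn (fun u : ℝ => (((t + t * u) ^ γ - (t * u) ^ γ) / γ) ^ 2)
      (fun u : ℝ => t ^ (2 * γ) / γ ^ 2 * ggAux γ u) (uIcc (0:ℝ) ((T - t) / t)) := by
    intro u hu
    rw [uIcc_of_le hTt', mem_Icc] at hu
    have hu0 : 0 ≤ u := hu.1
    have e1 : t + t * u = t * (1 + u) := by ring
    have e2 : (t * (1 + u)) ^ γ = t ^ γ * (1 + u) ^ γ :=
      Real.mul_rpow ht0.le (by linarith)
    have e3 : (t * u) ^ γ = t ^ γ * u ^ γ := Real.mul_rpow ht0.le hu0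
    have e4 : t ^ (2 * γ) = (t ^ γ) ^ 2 := by
      rw [sq, ← Real.rpow_add ht0]; congr 1; ring
    simp only [e1, e2, e3, ggAux, e4]
    field_simp
  rw [intervalIntegral.integral_congr hcongr, intervalIntegral.integral_const_mul]
  have e5 : t ^ (2 * γ + 1) = t * t ^ (2 * γ) := by
    rw [Real.rpow_add ht0, Real.rpow_one]; ring
  rw [GGAux, e5]
  ring

/-- Case `0 < α − β < 1/2`: `χ` is twice continuously differentiable on `(0,T)`,
`χ(0) = χ'(0) = 0`, and `χ(t) ≤ N(α,β,T) t^{2(α−β)+1}` on `(0,T)`. -/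
theorem chiFun_bound_small_pos (α β T : ℝ) (h₁ : 0 < α - β) (h₂ : α - β < 1 / 2)
    (hT : 0 < T) :
    ContDiffOn ℝ 2 (chiFun α β T) (Ioo (0 : ℝ) T) ∧
      chiFun α β T 0 = 0 ∧ deriv (chiFun α β T) 0 = 0 ∧
      ∃ N : ℝ, 0 < N ∧ ∀ t ∈ Ioo (0 : ℝ) T,
        chiFun α β T t ≤ N * t ^ (2 * (α - β) + 1) := by
  set γ := α - β with hγdef
  have hden : 0 < 1 - 2 * γ := by linarith
  set M : ℝ := 4 + γ ^ 2 / (1 - 2 * γ) with hM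
  have hMpos : 0 < M := by
    have : 0 ≤ γ ^ 2 / (1 - 2 * γ) := by positivity
    simp only [hM]; linarith
  set N : ℝ := M / γ ^ 2 with hN
  have hNpos : 0 < N := div_pos hMpos (by positivity)
  -- the bound
  have hbound : ∀ t ∈ Ioo (0:ℝ) T, chiFun α β T t ≤ N * t ^ (2 * γ + 1) := by
    intro t ht
    rw [chiFun_eq α β T h₁ ht]
    have hφ : 0 ≤ (T - t) / t := div_nonneg (by linarith [ht.2]) ht.1.le
    have hGG := GGAux_le h₁ h₂ hφ
    have hpow : (0:ℝ) ≤ t ^ (2 * γ + 1) / γ ^ 2 := div_nonneg (Real.rpow_nonneg ht.1.le _) (sq_nonneg γ)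
    calc t ^ (2 * γ + 1) / γ ^ 2 * GGAux γ ((T - t) / t)
        ≤ t ^ (2 * γ + 1) / γ ^ 2 * M := mul_le_mul_of_nonneg_left hGG hpow
      _ = N * t ^ (2 * γ + 1) := by rw [hN]; ring
  have hnonneg : ∀ t ∈ Ioo (0:ℝ) T, 0 ≤ chiFun α β T t := by
    intro t ht
    rw [chiFun_eq α β T h₁ ht]
    have hφ : 0 ≤ (T - t) / t := div_nonneg (by linarith [ht.2]) ht.1.le
    exact mul_nonneg (div_nonneg (Real.rpow_nonneg ht.1.le _) (sq_nonneg γ)) (GGAux_nonneg hφ)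
  refine ⟨?_, chiFun_of_nonpos α β T le_rfl, ?_, N, hNpos, hbound⟩
  · -- ContDiffOn
    have hpow : ContDiffOn ℝ 2 (fun t : ℝ => t ^ (2 * γ + 1)) (Ioo (0:ℝ) T) :=
      fun t ht => (Real.contDiffAt_rpow_const_of_ne ht.1.ne').contDiffWithinAt
    have hφ : ContDiffOn ℝ 2 (fun t : ℝ => (T - t) / t) (Ioo (0:ℝ) T) :=
      ContDiffOn.div (contDiffOn_const.sub contDiffOn_id) contDiffOn_id
        (fun t ht => ht.1.ne')
    have hmaps : MapsTo (fun t : ℝ => (T - t) / t) (Ioo (0:ℝ) T) (Ioi (0:ℝ)) :=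
      fun t ht => div_pos (by linarith [ht.2]) ht.1
    have hF : ContDiffOn ℝ 2
        (fun t : ℝ => t ^ (2 * γ + 1) / γ ^ 2 * GGAux γ ((T - t) / t)) (Ioo (0:ℝ) T) :=
      (hpow.div_const _).mul ((contDiffOn_GGAux h₁).comp hφ hmaps)
    exact hF.congr (fun t ht => chiFun_eq α β T h₁ ht)
  · -- derivative at 0
    have hd : HasDerivAt (chiFun α β T) 0 0 := by
      rw [hasDerivAt_iff_isLittleO]
      simp only [sub_zero, smul_zero, chiFun_of_nonpos α β T le_rfl, sub_zero]
      rw [Asymptotics.isLittleO_iff]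
      intro c hc
      have htend : Filter.Tendsto (fun t : ℝ => N * |t| ^ (2 * γ)) (nhds 0) (nhds 0) := by
        have h1 : ContinuousAt (fun t : ℝ => |t| ^ (2 * γ)) 0 :=
          (Real.continuousAt_rpow_const _ _ (Or.inr (by linarith))).comp
            continuous_abs.continuousAt
        have h2 : ContinuousAt (fun t : ℝ => N * |t| ^ (2 * γ)) 0 :=
          continuousAt_const.mul h1
        have h3 := h2.tendsto
        simpa [Real.zero_rpow (by linarith : 2 * γ ≠ 0)] using h3
      have hev1 := htend.eventually (gt_mem_nhds hc)
      have hev2 : ∀ᶠ t : ℝ in nhds 0, t ∈ Iio T :=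
        Filter.eventually_of_mem (Iio_mem_nhds hT) (fun t ht => ht)
      filter_upwards [hev1, hev2] with t hlt htT
      rcases le_or_gt t 0 with h0 | h0
      · rw [chiFun_of_nonpos α β T h0, norm_zero]
        positivity
      · have htio : t ∈ Ioo (0:ℝ) T := ⟨h0, htT⟩
        rw [Real.norm_of_nonneg (hnonneg t htio), Real.norm_eq_abs, abs_of_pos h0]
        calc chiFun α β T t ≤ N * t ^ (2 * γ + 1) := hbound t htio
          _ = N * |t| ^ (2 * γ) * t := by
              rw [abs_of_pos h0, Real.rpow_add h0, Real.rpow_one]; ring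
          _ ≤ c * t := mul_le_mul_of_nonneg_right hlt.le h0.le
    rw [hd.deriv]
end

section
/- Let α − β = 1/2 and T > 0. Define χ(t) := ∫₀^{T−t} (∫_r^{t+r} s^{−1/2} ds)² dr. Then there exists N = N(T) such that χ(t) ≤ N t² (1 + |log t|) for all t ∈ (0,T). -/
open MeasureTheory Set

/-- The function `χ(t) = ∫₀^{T−t} (∫_r^{t+r} s^{−1/2} ds)² dr`. -/
noncomputable def chiHalf (T t : ℝ) : ℝ :=
  ∫ r in Ioo (0 : ℝ) (T - t), (∫ s in Ioo r (t + r), s ^ (-(1 / 2) : ℝ)) ^ 2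

/-- Case `α − β = 1/2`: `χ(t) ≤ N(T) t² (1 + |log t|)` on `(0,T)`. -/
theorem chiHalf_bound (T : ℝ) (hT : 0 < T) :
    ∃ N : ℝ, 0 < N ∧ ∀ t ∈ Ioo (0 : ℝ) T,
      chiHalf T t ≤ N * t ^ 2 * (1 + |Real.log t|) := by
  refine ⟨4 * (1 + |Real.log T|), by positivity, ?_⟩
  rintro t ⟨ht0, htT⟩
  have hTt : 0 < T - t := by linarith
  set g : ℝ → ℝ := fun r => 4 * t ^ 2 * (t + r)⁻¹ with hg
  -- integrability of g on Ioo 0 (T-t)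
  have hgcont : ContinuousOn g (Icc 0 (T - t)) := by
    refine continuousOn_const.mul (ContinuousOn.inv₀
      (continuousOn_const.add continuousOn_id) ?_)
    intro r hr
    have := hr.1
    positivity
  have hgint : IntegrableOn g (Ioo 0 (T - t)) := by
    exact (hgcont.integrableOn_Icc).mono_set Ioo_subset_Icc_self
  -- pointwise bound
  have hbound : ∀ r ∈ Ioo (0 : ℝ) (T - t),
      (∫ s in Ioo r (t + r), s ^ (-(1 / 2) : ℝ)) ^ 2 ≤ g r := by
    intro r hr
    have hr0 : 0 < r := hr.1
    have htr : 0 < t + r := by linarith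
    have hle : r ≤ t + r := by linarith
    have hinner : (∫ s in Ioo r (t + r), s ^ (-(1 / 2) : ℝ))
        = ((t + r) ^ ((1:ℝ)/2) - r ^ ((1:ℝ)/2)) / (1/2) := by
      rw [← integral_Ioc_eq_integral_Ioo, ← intervalIntegral.integral_of_le hle,
        integral_rpow (Or.inl (by norm_num))]
      norm_num
    rw [hinner]
    have ha : (t + r) ^ ((1:ℝ)/2) = Real.sqrt (t + r) := (Real.sqrt_eq_rpow _).symm
    have hb : r ^ ((1:ℝ)/2) = Real.sqrt r := (Real.sqrt_eq_rpow _).symm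
    rw [ha, hb]
    set a := Real.sqrt (t + r)
    set b := Real.sqrt r
    have ha2 : a ^ 2 = t + r := Real.sq_sqrt htr.le
    have hb2 : b ^ 2 = r := Real.sq_sqrt hr0.le
    have ha0 : 0 ≤ a := Real.sqrt_nonneg _
    have hb0 : 0 ≤ b := Real.sqrt_nonneg _
    have hgr : g r = 4 * t ^ 2 / (t + r) := by rw [hg]; ring
    rw [hgr, le_div_iff₀ htr]
    have hsq : ((a - b) / (1/2)) ^ 2 = 4 * (a - b) ^ 2 := by ring
    rw [hsq]
    nlinarith [sq_nonneg (a - b), sq_nonneg ((a - b) * b),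
      mul_nonneg (mul_nonneg ha0 hb0) (sq_nonneg (a - b))]
  -- integral comparison
  have hmono : chiHalf T t ≤ ∫ r in Ioo (0 : ℝ) (T - t), g r := by
    refine integral_mono_of_nonneg ?_ hgint ?_
    · exact ae_of_all _ fun r => sq_nonneg _
    · exact (ae_restrict_iff' measurableSet_Ioo).2 (ae_of_all _ hbound)
  -- compute the integral of g
  have hcalc : ∫ r in Ioo (0 : ℝ) (T - t), g r
      = 4 * t ^ 2 * (Real.log T - Real.log t) := by
    rw [← integral_Ioc_eq_integral_Ioo, ← intervalIntegral.integral_of_le hTt.le]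
    have : (∫ r in (0:ℝ)..(T - t), g r)
        = 4 * t ^ 2 * ∫ r in (0:ℝ)..(T - t), (fun x => x⁻¹) (t + r) := by
      rw [← intervalIntegral.integral_const_mul]
    rw [this, intervalIntegral.integral_comp_add_left (fun x => x⁻¹) t]
    have h1 : t + (T - t) = T := by ring
    have h2 : t + (0:ℝ) = t := by ring
    rw [h1, h2, integral_inv (by
      intro h
      rcases (mem_uIcc.mp h) with ⟨h3, _⟩ | ⟨h3, _⟩ <;> linarith)]
    rw [Real.log_div (by positivity) (by positivity)]
  have hfinal : 4 * t ^ 2 * (Real.log T - Real.log t)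
      ≤ 4 * (1 + |Real.log T|) * t ^ 2 * (1 + |Real.log t|) := by
    have h1 : Real.log T ≤ |Real.log T| := le_abs_self _
    have h2 : -Real.log t ≤ |Real.log t| := neg_le_abs _
    have h3 : (0:ℝ) ≤ |Real.log T| := abs_nonneg _
    have h4 : (0:ℝ) ≤ |Real.log t| := abs_nonneg _
    nlinarith [sq_nonneg t, mul_nonneg h3 h4]
  linarith [hmono, hcalc ▸ hmono]
end

section
/- Let α − β > 1/2 and T > 0. Define χ(t) := ∫₀^{T−t} (∫_r^{t+r} s^{α−β−1} ds)² dr. Then there exists N = N(α,β,T) such that χ(t) ≤ N t² for all t ∈ (0,T). -/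
open MeasureTheory Set

/-! With `γ = α − β − 1`, on `(r, t + r) ⊆ (0, T)` the integrand `s ^ γ` is bounded by
`T ^ γ + r ^ γ` whatever the sign of `γ`, so the inner integral is at most `t (T ^ γ + r ^ γ)` and
`χ(t) ≤ t² ∫₀^T (T ^ γ + r ^ γ)² dr`. The last integral is finite because `r ^ (2γ)` is integrable
at `0`, i.e. `2(α − β) − 1 > 0`. -/

lemma rpow_le_rpow_add_rpow {r s T : ℝ} (γ : ℝ) (hr : 0 < r) (hrs : r ≤ s) (hsT : s ≤ T) :
    s ^ γ ≤ T ^ γ + r ^ γ := by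
  have hs : 0 < s := hr.trans_le hrs
  rcases le_or_gt 0 γ with hγ | hγ
  · linarith [Real.rpow_le_rpow hs.le hsT hγ, Real.rpow_nonneg hr.le γ]
  · linarith [Real.rpow_le_rpow_of_nonpos hr hrs hγ.le, Real.rpow_nonneg (hs.le.trans hsT) γ]

lemma abs_setIntegral_Ioo_rpow_le {r t T : ℝ} (γ : ℝ) (hr : 0 < r) (ht : 0 ≤ t)
    (htrT : t + r ≤ T) :
    |∫ s in Ioo r (t + r), s ^ γ| ≤ (T ^ γ + r ^ γ) * t := by
  have hvol : (volume : Measure ℝ).real (Ioo r (t + r)) = t := by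
    rw [Real.volume_real_Ioo_of_le (by linarith), add_sub_cancel_right]
  have hbound : ∀ s ∈ Ioo r (t + r), ‖s ^ γ‖ ≤ T ^ γ + r ^ γ := fun s hs => by
    rw [Real.norm_of_nonneg (Real.rpow_nonneg (hr.trans hs.1).le γ)]
    exact rpow_le_rpow_add_rpow γ hr hs.1.le (hs.2.le.trans htrT)
  have hnorm := norm_setIntegral_le_of_norm_le_const (measure_Ioo_lt_top (μ := volume)) hbound
  rwa [hvol, Real.norm_eq_abs] at hnorm

lemma integrableOn_const_add_rpow_sq (c : ℝ) {γ : ℝ} (hγ : -(1 / 2) < γ) (T : ℝ) :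
    IntegrableOn (fun r : ℝ => (c + r ^ γ) ^ 2) (Ioo 0 T) := by
  rcases le_or_gt T 0 with hT | hT
  · simp [Ioo_eq_empty_of_le hT]
  have hpow {δ : ℝ} (hδ : -1 < δ) : IntegrableOn (fun r : ℝ => r ^ δ) (Ioo 0 T) :=
    (intervalIntegral.integrableOn_Ioo_rpow_iff hT).2 hδ
  have hexpand : IntegrableOn (fun r : ℝ => c ^ 2 + 2 * c * r ^ γ + r ^ (2 * γ)) (Ioo 0 T) :=
    ((integrableOn_const measure_Ioo_lt_top.ne).add ((hpow (by linarith)).const_mul _)).add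
      (hpow (by linarith))
  refine hexpand.congr_fun (fun r hr => ?_) measurableSet_Ioo
  dsimp only
  rw [mul_comm 2 γ, Real.rpow_mul hr.1.le, Real.rpow_two]
  ring

theorem chiFun_bound_large_general (α β T : ℝ) (h : 1 / 2 < α - β) :
    ∃ N : ℝ, 0 < N ∧ ∀ t ∈ Ioo (0 : ℝ) T, chiFun α β T t ≤ N * t ^ 2 := by
  set γ := α - β - 1
  set M := ∫ r in Ioo (0 : ℝ) T, (T ^ γ + r ^ γ) ^ 2
  have hM : 0 ≤ M := integral_nonneg fun r => sq_nonneg _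
  have hint := integrableOn_const_add_rpow_sq (T ^ γ) (show -(1 / 2) < γ by linarith) T
  refine ⟨M + 1, by linarith, fun t ⟨ht, htT⟩ => ?_⟩
  have hsub : Ioo (0 : ℝ) (T - t) ⊆ Ioo 0 T := Ioo_subset_Ioo_right (by linarith)
  have hinner : ∀ r ∈ Ioo (0 : ℝ) (T - t),
      (∫ s in Ioo r (t + r), s ^ γ) ^ 2 ≤ t ^ 2 * (T ^ γ + r ^ γ) ^ 2 := fun r hr => by
    rw [← sq_abs, ← mul_pow, mul_comm]
    exact pow_le_pow_left₀ (abs_nonneg _)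
      (abs_setIntegral_Ioo_rpow_le γ hr.1 ht.le (by linarith [hr.2])) 2
  calc chiFun α β T t ≤ ∫ r in Ioo (0 : ℝ) (T - t), t ^ 2 * (T ^ γ + r ^ γ) ^ 2 :=
        setIntegral_mono_of_nonneg (fun _ _ => sq_nonneg _) hinner
          ((hint.mono_set hsub).const_mul _)
    _ ≤ t ^ 2 * M := by
        rw [integral_const_mul]
        exact mul_le_mul_of_nonneg_left
          (setIntegral_mono_set hint (.of_forall fun _ => sq_nonneg _) hsub.eventuallyLE)
          (sq_nonneg t)
    _ ≤ (M + 1) * t ^ 2 := by nlinarith [sq_nonneg t]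

/-- Case `α − β > 1/2`: `χ(t) ≤ N(α,β,T) t²` on `(0,T)`. -/
theorem chiFun_bound_large (α β T : ℝ) (h : 1 / 2 < α - β) (hT : 0 < T) :
    ∃ N : ℝ, 0 < N ∧ ∀ t ∈ Ioo (0 : ℝ) T, chiFun α β T t ≤ N * t ^ 2 :=
  chiFun_bound_large_general α β T h
end

section
/- Let α ∈ (0,1), β ∈ ℝ with α − β > −1/2, p > 1, μ ∈ (0,1) with μ < (α − β + 1/2)/α and μp(α) > 1. Then the integral H₁ := ∫₀^T t^{−1−αμp} (∫₀^{T−t} (∫_r^{t+r} s^{α−β−1} ds)² dr)^{p/2} dt is finite. -/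
open MeasureTheory Set

open Real

/-! Write `γ = α - β` and fix `δ ∈ (αμ - 1/2, min γ (1/2))`. On `(0, T)` we have
`s^(γ-1) ≤ T^(γ-δ) s^(δ-1)`, and `∫_r^(t+r) s^(δ-1) ds` is at most `t r^(δ-1)` and,
for `r ≤ t`, a multiple of `t^(δ-e) r^e` for an auxiliary `e ∈ (-1/2, 0)`. Squaring and
splitting the `r`-integral at `r = t` gives `χ(t) ≤ K t^(2δ+1)`, so the integrand of `H₁` is
`O(t^(-1-αμp+(2δ+1)p/2))`, and this exponent exceeds `-1` because `αμ < δ + 1/2`. -/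

theorem measurable_setIntegral_Ioo {X : Type*} [MeasurableSpace X] {f : X × ℝ → ℝ}
    (hf : Measurable f) {a b : X → ℝ} (ha : Measurable a) (hb : Measurable b) :
    Measurable fun x => ∫ y in Ioo (a x) (b x), f (x, y) := by
  have hS : MeasurableSet {q : X × ℝ | a q.1 < q.2 ∧ q.2 < b q.1} :=
    (measurableSet_lt (ha.comp measurable_fst) measurable_snd).inter
      (measurableSet_lt measurable_snd (hb.comp measurable_fst))
  have h := ((hf.indicator hS).stronglyMeasurable.integral_prod_right'
    (ν := (volume : Measure ℝ))).measurable
  convert h using 2 with x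
  rw [← integral_indicator measurableSet_Ioo]
  rfl

theorem measurable_chiFun (α β T : ℝ) : Measurable (chiFun α β T) := by
  have hF : Measurable fun q : ℝ × ℝ => ∫ s in Ioo q.2 (q.1 + q.2), s ^ (α - β - 1) :=
    measurable_setIntegral_Ioo (f := fun q => q.2 ^ (α - β - 1)) (by fun_prop) (by fun_prop)
      (by fun_prop)
  exact measurable_setIntegral_Ioo (hF.pow_const 2) measurable_const (by fun_prop)

theorem chiFun_nonneg (α β T t : ℝ) : 0 ≤ chiFun α β T t :=
  setIntegral_nonneg measurableSet_Ioo fun _ _ => sq_nonneg _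

theorem integral_Ioc_zero_mul_rpow {a c k p : ℝ} (hc : 0 < c) (hp : -1 < p) :
    ∫ r in Ioc 0 c, a * c ^ (k - p) * r ^ p = a / (p + 1) * c ^ (k + 1) := by
  rw [integral_const_mul, ← intervalIntegral.integral_of_le hc.le, integral_rpow (Or.inl hp),
    zero_rpow (by linarith), sub_zero, show k + 1 = k - p + (p + 1) by ring,
    rpow_add hc (k - p)]
  ring

theorem integral_Ioi_mul_rpow {b c k q : ℝ} (hc : 0 < c) (hq : q < -1) :
    ∫ r in Ioi c, b * c ^ (k - q) * r ^ q = b / -(q + 1) * c ^ (k + 1) := by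
  rw [integral_const_mul, integral_Ioi_rpow_of_lt hq hc,
    show k + 1 = k - q + (q + 1) by ring, rpow_add hc (k - q), neg_div, div_neg]
  ring

theorem setIntegral_le_of_le_rpow {S : Set ℝ} (hS : MeasurableSet S) (hS₀ : S ⊆ Ioi 0)
    {f : ℝ → ℝ} {a b c k p q : ℝ} (ha : 0 ≤ a) (hb : 0 ≤ b) (hc : 0 < c) (hp : -1 < p)
    (hq : q < -1) (hf_le : ∀ r ∈ S, r ≤ c → f r ≤ a * c ^ (k - p) * r ^ p)
    (hf_gt : ∀ r ∈ S, c < r → f r ≤ b * c ^ (k - q) * r ^ q) :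
    ∫ r in S, f r ≤ (a / (p + 1) + b / -(q + 1)) * c ^ (k + 1) := by
  set g : ℝ → ℝ := fun r =>
    if r ≤ c then a * c ^ (k - p) * r ^ p else b * c ^ (k - q) * r ^ q
  have hg_Ioc : EqOn g (fun r => a * c ^ (k - p) * r ^ p) (Ioc 0 c) := fun r hr => if_pos hr.2
  have hg_Ioi : EqOn g (fun r => b * c ^ (k - q) * r ^ q) (Ioi c) :=
    fun r hr => if_neg (not_le.mpr hr)
  have hint_Ioc : IntegrableOn g (Ioc 0 c) :=
    IntegrableOn.congr_fun ((intervalIntegral.intervalIntegrable_rpow' hp).1.const_mul _)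
      hg_Ioc.symm measurableSet_Ioc
  have hint_Ioi : IntegrableOn g (Ioi c) :=
    IntegrableOn.congr_fun ((integrableOn_Ioi_rpow_of_lt hq hc).const_mul _) hg_Ioi.symm
      measurableSet_Ioi
  have hg_int : IntegrableOn g (Ioi 0) := by
    rw [← Ioc_union_Ioi_eq_Ioi hc.le]
    exact hint_Ioc.union hint_Ioi
  have hg_nonneg : ∀ r ∈ Ioi (0 : ℝ), 0 ≤ g r := by
    intro r (hr : 0 < r)
    dsimp only [g]
    split_ifs <;> positivity
  have hg_integral : ∫ r in Ioi 0, g r = (a / (p + 1) + b / -(q + 1)) * c ^ (k + 1) := by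
    rw [← Ioc_union_Ioi_eq_Ioi hc.le, setIntegral_union (Ioc_disjoint_Ioi le_rfl)
      measurableSet_Ioi hint_Ioc hint_Ioi, setIntegral_congr_fun measurableSet_Ioc hg_Ioc,
      setIntegral_congr_fun measurableSet_Ioi hg_Ioi, integral_Ioc_zero_mul_rpow hc hp,
      integral_Ioi_mul_rpow hc hq, add_mul]
  by_cases hfi : IntegrableOn f S
  · calc ∫ r in S, f r ≤ ∫ r in S, g r := by
          refine setIntegral_mono_on hfi (hg_int.mono_set hS₀) hS fun r hr => ?_
          by_cases hrc : r ≤ c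
          · simpa only [g, if_pos hrc] using hf_le r hr hrc
          · simpa only [g, if_neg hrc] using hf_gt r hr (not_le.mp hrc)
      _ ≤ ∫ r in Ioi 0, g r :=
          setIntegral_mono_set hg_int ((ae_restrict_iff' measurableSet_Ioi).mpr
            (ae_of_all _ hg_nonneg)) hS₀.eventuallyLE
      _ = _ := hg_integral
  · have hp₁ : 0 < p + 1 := by linarith
    have hq₁ : 0 < -(q + 1) := by linarith
    rw [integral_undef hfi]
    positivity

theorem setIntegral_sq_le_of_le_rpow {S : Set ℝ} (hS : MeasurableSet S) (hS₀ : S ⊆ Ioi 0)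
    {f : ℝ → ℝ} {a b c k p q : ℝ} (hc : 0 < c) (hp : -1 < 2 * p) (hq : 2 * q < -1)
    (hf₀ : ∀ r ∈ S, 0 ≤ f r)
    (hf_le : ∀ r ∈ S, r ≤ c → f r ≤ a * c ^ (k - p) * r ^ p)
    (hf_gt : ∀ r ∈ S, c < r → f r ≤ b * c ^ (k - q) * r ^ q) :
    ∫ r in S, f r ^ 2 ≤ (a ^ 2 / (2 * p + 1) + b ^ 2 / -(2 * q + 1)) * c ^ (2 * k + 1) := by
  have hsq : ∀ r ∈ S, ∀ {d e : ℝ}, f r ≤ d * c ^ (k - e) * r ^ e →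
      f r ^ 2 ≤ d ^ 2 * c ^ (2 * k - 2 * e) * r ^ (2 * e) := by
    intro r hr d e h
    have hr₀ : 0 ≤ r := le_of_lt (hS₀ hr)
    calc f r ^ 2 ≤ (d * c ^ (k - e) * r ^ e) ^ 2 := pow_le_pow_left₀ (hf₀ r hr) h 2
      _ = d ^ 2 * c ^ ((k - e) * (2 : ℕ)) * r ^ (e * (2 : ℕ)) := by
          rw [rpow_mul_natCast hc.le, rpow_mul_natCast hr₀]; ring
      _ = d ^ 2 * c ^ (2 * k - 2 * e) * r ^ (2 * e) := by ring_nf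
  exact setIntegral_le_of_le_rpow hS hS₀ (sq_nonneg a) (sq_nonneg b) hc hp hq
    (fun r hr hrc => hsq r hr (hf_le r hr hrc)) (fun r hr hrc => hsq r hr (hf_gt r hr hrc))

theorem integrableOn_Ioo_rpow_of_pos {r : ℝ} (hr : 0 < r) (u e : ℝ) :
    IntegrableOn (fun s : ℝ => s ^ e) (Ioo r u) :=
  ((continuousOn_id.rpow_const fun _ hs => Or.inl (hr.trans_le hs.1).ne').integrableOn_Icc).mono_set
    Ioo_subset_Icc_self

theorem rpow_sub_one_eq_mul {s : ℝ} (hs : 0 < s) (a b : ℝ) :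
    s ^ (a - 1) = s ^ (a - b) * s ^ (b - 1) := by
  rw [← rpow_add hs]; ring_nf

theorem setIntegral_Ioo_rpow_le_rpow_mul {r u T γ δ : ℝ} (hr : 0 < r) (huT : u ≤ T)
    (hδγ : δ ≤ γ) :
    ∫ s in Ioo r u, s ^ (γ - 1) ≤ T ^ (γ - δ) * ∫ s in Ioo r u, s ^ (δ - 1) := by
  rw [← integral_const_mul]
  refine setIntegral_mono_on (integrableOn_Ioo_rpow_of_pos hr _ _)
    ((integrableOn_Ioo_rpow_of_pos hr _ _).const_mul _) measurableSet_Ioo fun s hs => ?_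
  have hs₀ : 0 < s := hr.trans hs.1
  rw [rpow_sub_one_eq_mul hs₀ γ δ]
  gcongr
  exact hs.2.le.trans huT

theorem setIntegral_Ioo_rpow_le_mul {r t δ : ℝ} (hr : 0 < r) (ht : 0 ≤ t) (hδ : δ ≤ 1) :
    ∫ s in Ioo r (t + r), s ^ (δ - 1) ≤ t * r ^ (δ - 1) := by
  calc ∫ s in Ioo r (t + r), s ^ (δ - 1) ≤ ∫ s in Ioo r (t + r), r ^ (δ - 1) :=
        setIntegral_mono_on (integrableOn_Ioo_rpow_of_pos hr _ _)
          (integrableOn_const measure_Ioo_lt_top.ne) measurableSet_Ioo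
          fun s hs => rpow_le_rpow_of_nonpos hr hs.1.le (by linarith)
    _ = t * r ^ (δ - 1) := by
        rw [setIntegral_const, volume_real_Ioo_of_le (by linarith), add_sub_cancel_right,
          smul_eq_mul]

theorem setIntegral_Ioo_rpow_le_rpow {r t δ e : ℝ} (hr : 0 < r) (hrt : r ≤ t) (he : e < 0)
    (heδ : e ≤ δ) :
    ∫ s in Ioo r (t + r), s ^ (δ - 1) ≤ (2 * t) ^ (δ - e) * (r ^ e / -e) := by
  have htail : IntegrableOn (fun s : ℝ => s ^ (e - 1)) (Ioi r) :=
    integrableOn_Ioi_rpow_of_lt (by linarith) hr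
  calc ∫ s in Ioo r (t + r), s ^ (δ - 1)
      ≤ ∫ s in Ioo r (t + r), (2 * t) ^ (δ - e) * s ^ (e - 1) := by
        refine setIntegral_mono_on (integrableOn_Ioo_rpow_of_pos hr _ _)
          ((integrableOn_Ioo_rpow_of_pos hr _ _).const_mul _) measurableSet_Ioo fun s hs => ?_
        have hs₀ : 0 < s := hr.trans hs.1
        rw [rpow_sub_one_eq_mul hs₀ δ e]
        gcongr
        linarith [hs.2]
    _ = (2 * t) ^ (δ - e) * ∫ s in Ioo r (t + r), s ^ (e - 1) := integral_const_mul _ _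
    _ ≤ (2 * t) ^ (δ - e) * ∫ s in Ioi r, s ^ (e - 1) := by
        refine mul_le_mul_of_nonneg_left ?_ (rpow_nonneg (by linarith) _)
        exact setIntegral_mono_set htail ((ae_restrict_iff' measurableSet_Ioi).mpr
          (ae_of_all _ fun s (hs : r < s) => (rpow_pos_of_pos (hr.trans hs) _).le))
          Ioo_subset_Ioi_self.eventuallyLE
    _ = (2 * t) ^ (δ - e) * (r ^ e / -e) := by
        rw [integral_Ioi_rpow_of_lt (by linarith) hr, sub_add_cancel, neg_div, div_neg]

theorem chiFun_le_mul_rpow {α β T δ : ℝ} (hδ₀ : -(1 / 2) < δ) (hδ₁ : δ < 1 / 2)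
    (hδ : δ ≤ α - β) :
    ∃ K, 0 ≤ K ∧ ∀ t ∈ Ioo 0 T, chiFun α β T t ≤ K * t ^ (2 * δ + 1) := by
  obtain ⟨e, he₀, heδ, he⟩ : ∃ e, e < 0 ∧ e ≤ δ ∧ -1 < 2 * e :=
    ⟨(2 * δ - 1) / 4, by linarith, by linarith, by linarith⟩
  set C := T ^ (α - β - δ)
  set a := C * 2 ^ (δ - e) / -e
  refine ⟨a ^ 2 / (2 * e + 1) + C ^ 2 / -(2 * (δ - 1) + 1),
    add_nonneg (div_nonneg (sq_nonneg _) (by linarith)) (div_nonneg (sq_nonneg _) (by linarith)),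
    fun t ⟨ht₀, htT⟩ => ?_⟩
  have hC : 0 ≤ C := rpow_nonneg (ht₀.trans htT).le _
  have hF : ∀ r ∈ Ioo 0 (T - t), ∫ s in Ioo r (t + r), s ^ (α - β - 1) ≤
      C * ∫ s in Ioo r (t + r), s ^ (δ - 1) :=
    fun r hr => setIntegral_Ioo_rpow_le_rpow_mul hr.1 (by linarith [hr.2]) hδ
  refine setIntegral_sq_le_of_le_rpow measurableSet_Ioo Ioo_subset_Ioi_self ht₀ he
    (by linarith) (fun r hr => setIntegral_nonneg measurableSet_Ioo
      fun s hs => (rpow_pos_of_pos (hr.1.trans hs.1) _).le) (fun r hr hrt => ?_)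
    (fun r hr hrt => ?_)
  · calc _ ≤ C * ((2 * t) ^ (δ - e) * (r ^ e / -e)) :=
          (hF r hr).trans (mul_le_mul_of_nonneg_left
            (setIntegral_Ioo_rpow_le_rpow hr.1 hrt he₀ heδ) hC)
      _ = a * t ^ (δ - e) * r ^ e := by
          rw [mul_rpow zero_le_two ht₀.le]; ring
  · calc _ ≤ C * (t * r ^ (δ - 1)) :=
          (hF r hr).trans (mul_le_mul_of_nonneg_left
            (setIntegral_Ioo_rpow_le_mul hr.1 ht₀.le (by linarith)) hC)
      _ = C * t ^ (δ - (δ - 1)) * r ^ (δ - 1) := by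
          rw [sub_sub_cancel, rpow_one, mul_assoc]

theorem integrableOn_rpow_mul_rpow_of_le {φ : ℝ → ℝ} {T K m n q : ℝ} (hφ : Measurable φ)
    (hK : 0 ≤ K) (hq : 0 ≤ q) (hφ₀ : ∀ t, 0 ≤ φ t)
    (hφK : ∀ t ∈ Ioo 0 T, φ t ≤ K * t ^ m) (hnmq : -1 < n + m * q) :
    IntegrableOn (fun t => t ^ n * φ t ^ q) (Ioo 0 T) := by
  have hmeas : Measurable fun t => t ^ n * φ t ^ q := by fun_prop
  refine Integrable.mono' (((intervalIntegral.intervalIntegrable_rpow' hnmq).1.mono_set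
    Ioo_subset_Ioc_self).const_mul (K ^ q)) hmeas.aestronglyMeasurable
    ((ae_restrict_iff' measurableSet_Ioo).mpr (ae_of_all _ fun t ht => ?_))
  have ht₀ : 0 < t := ht.1
  rw [norm_of_nonneg (mul_nonneg (rpow_nonneg ht₀.le _) (rpow_nonneg (hφ₀ t) _))]
  calc t ^ n * φ t ^ q ≤ t ^ n * (K * t ^ m) ^ q := by gcongr; exacts [hφ₀ t, hφK t ht]
    _ = K ^ q * t ^ (n + m * q) := by
        rw [mul_rpow hK (by positivity), ← rpow_mul ht₀.le, rpow_add ht₀]; ring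

theorem H1_finite_general (α β p μ T : ℝ) (hα : α ∈ Ioo (0 : ℝ) 1)
    (hp : 1 < p) (hμ : μ ∈ Ioo (0 : ℝ) 1)
    (hμ₂ : μ < (α - β + 1 / 2) / α) :
    IntegrableOn (fun t => t ^ (-1 - α * μ * p) * (chiFun α β T t) ^ (p / 2))
      (Ioo (0 : ℝ) T) := by
  obtain ⟨hα₀, hα₁⟩ := hα
  obtain ⟨hμ₀, hμ₁⟩ := hμ
  have hαμ₀ : 0 < α * μ := mul_pos hα₀ hμ₀
  have hαμ₁ : α * μ < 1 := mul_lt_one_of_nonneg_of_lt_one_left hα₀.le hα₁ hμ₁.le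
  have hαμβ : α * μ < α - β + 1 / 2 := (lt_div_iff₀' hα₀).mp hμ₂
  obtain ⟨δ, hδμ, hδ⟩ : ∃ δ, α * μ - 1 / 2 < δ ∧ δ < min (α - β) (1 / 2) :=
    exists_between (lt_min (by linarith) (by linarith))
  obtain ⟨K, hK, hχK⟩ := chiFun_le_mul_rpow (α := α) (β := β) (T := T)
    (by linarith) (hδ.trans_le (min_le_right _ _)) (hδ.le.trans (min_le_left _ _))
  refine integrableOn_rpow_mul_rpow_of_le (measurable_chiFun α β T) hK (by linarith)
    (chiFun_nonneg α β T) hχK ?_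
  nlinarith

/-- Finiteness of `H₁ = ∫₀^T t^{−1−αμp} χ(t)^{p/2} dt`. -/
theorem H1_finite (α β p μ T : ℝ) (hα : α ∈ Ioo (0 : ℝ) 1)
    (hαβ : -(1 / 2) < α - β) (hp : 1 < p) (hμ : μ ∈ Ioo (0 : ℝ) 1)
    (hμ₂ : μ < (α - β + 1 / 2) / α) (hμ₃ : 1 < α * μ * p) (hT : 0 < T) :
    IntegrableOn (fun t => t ^ (-1 - α * μ * p) * (chiFun α β T t) ^ (p / 2))
      (Ioo (0 : ℝ) T) :=
  H1_finite_general α β p μ T hα hp hμ hμ₂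
end
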